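/- Let the Dirac operator restricted to the 4-dimensional subspace spanned by (ν_R, ν_L, ν̄_R, ν̄_L) be the block matrix D = [[0, M_ν†, M̄_R†, 0], [M_ν, 0, 0, 0], [M̄_R, 0, 0, M̄_ν†], [0, 0, M̄_ν, 0]] where M_ν, M_R are complex numbers (one-generation case) with M_R ≠ 0 and |M_ν| ≪ |M_R|. Then the four eigenvalues of D come in pairs ±λ₁, ±λ₂ with λ₁λ₂ = |M_ν|², and λ₁ ≈ |M_ν|²/|M_R| and λ₂ ≈ |M_R| to leading order in |M_ν|/|M_R|; in particular the product of the small and large eigenvalue magnitudes equals |M_ν|², exhibiting the see-saw relation. -/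

import Mathlib

/-!
The characteristic polynomial of `D` is the biquadratic `t⁴ - (2a² + b²) t² + a⁴`, where
`a = ‖M_ν‖` and `b = ‖M_R‖`, so its roots are `±λ₁, ±λ₂` with `λ₁² + λ₂² = 2a² + b²` and
`λ₁ λ₂ = a²`. Then `(λ₂ - λ₁)² = b²` and `(λ₂ + λ₁)² = 4a² + b²`, giving the closed forms
`λ₁,₂ = (√(4a² + b²) ∓ b) / 2`. The bounds on `λ₂` come from `b ≤ √(4a² + b²)` and
`λ₂² ≤ λ₁² + λ₂²`; those on `λ₁ = a² / λ₂` follow from them.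
-/

open Complex Polynomial

theorem roots_biquadratic {R : Type*} [CommRing R] [IsDomain R] (x y : R) :
    (X ^ 4 - C (x ^ 2 + y ^ 2) * X ^ 2 + C ((x * y) ^ 2) : R[X]).roots = {x, -x, y, -y} := by
  have hfactor : (X ^ 4 - C (x ^ 2 + y ^ 2) * X ^ 2 + C ((x * y) ^ 2) : R[X]) =
      (({x, -x, y, -y} : Multiset R).map (fun c => X - C c)).prod := by
    simp only [Multiset.insert_eq_cons, Multiset.map_cons, Multiset.map_singleton,
      Multiset.prod_cons, Multiset.prod_singleton, map_neg, map_add, map_pow, map_mul]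
    ring
  rw [hfactor, roots_multiset_prod_X_sub_C]

theorem charpoly_seesaw (Mν MR : ℂ) :
    (!![0, (starRingEnd ℂ) Mν, MR, 0;
        Mν, 0, 0, 0;
        (starRingEnd ℂ) MR, 0, 0, Mν;
        0, 0, (starRingEnd ℂ) Mν, 0] : Matrix (Fin 4) (Fin 4) ℂ).charpoly
      = X ^ 4 - C (2 * (‖Mν‖ : ℂ) ^ 2 + (‖MR‖ : ℂ) ^ 2) * X ^ 2 + C (((‖Mν‖ : ℂ) ^ 2) ^ 2) := by
  have hν : (‖Mν‖ : ℂ) ^ 2 = Mν * (starRingEnd ℂ) Mν := by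
    rw [mul_conj, normSq_eq_norm_sq]; push_cast; rfl
  have hR : (‖MR‖ : ℂ) ^ 2 = MR * (starRingEnd ℂ) MR := by
    rw [mul_conj, normSq_eq_norm_sq]; push_cast; rfl
  rw [hν, hR, Matrix.charpoly]
  simp [Matrix.det_succ_row_zero, Fin.sum_univ_succ, Matrix.charmatrix_apply,
    Matrix.diagonal, Fin.succAbove, map_ofNat]
  ring

namespace Seesaw

variable (a b : ℝ)

noncomputable def light : ℝ := (√(4 * a ^ 2 + b ^ 2) - b) / 2

noncomputable def heavy : ℝ := (√(4 * a ^ 2 + b ^ 2) + b) / 2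

lemma light_mul_heavy : light a b * heavy a b = a ^ 2 := by
  have h := Real.sq_sqrt (show 0 ≤ 4 * a ^ 2 + b ^ 2 by positivity)
  unfold light heavy
  linear_combination h / 4

lemma sq_light_add_sq_heavy : light a b ^ 2 + heavy a b ^ 2 = 2 * a ^ 2 + b ^ 2 := by
  have h := Real.sq_sqrt (show 0 ≤ 4 * a ^ 2 + b ^ 2 by positivity)
  unfold light heavy
  linear_combination h / 2

variable {a b}

lemma le_sqrt_four_mul_sq_add_sq : b ≤ √(4 * a ^ 2 + b ^ 2) :=
  Real.le_sqrt_of_sq_le (by nlinarith [sq_nonneg a])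

lemma light_nonneg : 0 ≤ light a b := by
  unfold light; linarith [le_sqrt_four_mul_sq_add_sq (a := a) (b := b)]

lemma le_heavy : b ≤ heavy a b := by
  unfold heavy; linarith [le_sqrt_four_mul_sq_add_sq (a := a) (b := b)]

lemma light_le_heavy (hb : 0 ≤ b) : light a b ≤ heavy a b := by
  unfold light heavy; linarith

lemma heavy_le_sqrt : heavy a b ≤ √(2 * a ^ 2 + b ^ 2) :=
  Real.le_sqrt_of_sq_le (by nlinarith [sq_light_add_sq_heavy a b, sq_nonneg (light a b)])

lemma light_eq_div (hb : 0 < b) : light a b = a ^ 2 / heavy a b := by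
  rw [eq_div_iff (hb.trans_le le_heavy).ne', light_mul_heavy]

lemma div_sqrt_le_light (hb : 0 < b) : a ^ 2 / √(2 * a ^ 2 + b ^ 2) ≤ light a b := by
  rw [light_eq_div hb]
  exact div_le_div_of_nonneg_left (sq_nonneg a) (hb.trans_le le_heavy) heavy_le_sqrt

lemma light_le_div (hb : 0 < b) : light a b ≤ a ^ 2 / b := by
  rw [light_eq_div hb]
  exact div_le_div_of_nonneg_left (sq_nonneg a) hb le_heavy

end Seesaw

open Seesaw

theorem stmt_19_general (Mν MR : ℂ) (hMR : MR ≠ 0)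
    (D : Matrix (Fin 4) (Fin 4) ℂ)
    (hD : D = !![0, (starRingEnd ℂ) Mν, MR, 0;
                 Mν, 0, 0, 0;
                 (starRingEnd ℂ) MR, 0, 0, Mν;
                 0, 0, (starRingEnd ℂ) Mν, 0]) :
    ∃ lam₁ lam₂ : ℝ, 0 ≤ lam₁ ∧ lam₁ ≤ lam₂ ∧
      D.charpoly.roots
        = {(lam₁ : ℂ), -(lam₁ : ℂ), (lam₂ : ℂ), -(lam₂ : ℂ)} ∧
      lam₁ * lam₂ = ‖Mν‖ ^ 2 ∧
      ‖MR‖ ≤ lam₂ ∧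
      lam₂ ≤ Real.sqrt (2 * ‖Mν‖ ^ 2 + ‖MR‖ ^ 2) ∧
      ‖Mν‖ ^ 2
          / Real.sqrt (2 * ‖Mν‖ ^ 2 + ‖MR‖ ^ 2) ≤ lam₁ ∧
      lam₁ ≤ ‖Mν‖ ^ 2 / ‖MR‖ := by
  have hb : 0 < ‖MR‖ := norm_pos_iff.mpr hMR
  refine ⟨light ‖Mν‖ ‖MR‖, heavy ‖Mν‖ ‖MR‖, light_nonneg, light_le_heavy hb.le, ?_,
    light_mul_heavy _ _, le_heavy, heavy_le_sqrt, div_sqrt_le_light hb, light_le_div hb⟩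
  have hsum : (light ‖Mν‖ ‖MR‖ : ℂ) ^ 2 + (heavy ‖Mν‖ ‖MR‖ : ℂ) ^ 2
      = 2 * (‖Mν‖ : ℂ) ^ 2 + (‖MR‖ : ℂ) ^ 2 := by
    exact_mod_cast sq_light_add_sq_heavy ‖Mν‖ ‖MR‖
  have hprod : ((light ‖Mν‖ ‖MR‖ : ℂ) * (heavy ‖Mν‖ ‖MR‖ : ℂ)) ^ 2 = ((‖Mν‖ : ℂ) ^ 2) ^ 2 := by
    rw [← ofReal_mul, light_mul_heavy]
    push_cast; rfl
  rw [hD, charpoly_seesaw, ← hsum, ← hprod, roots_biquadratic]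

/-- The see-saw mechanism in the one-generation NCG model: the Dirac operator
restricted to the subspace `(ν_R, ν_L, ν̄_R, ν̄_L)` is the block matrix
`D = [[0, M_ν†, M̄_R†, 0], [M_ν, 0, 0, 0], [M̄_R, 0, 0, M̄_ν†], [0, 0, M̄_ν, 0]]`.
Its four eigenvalues come in pairs `±λ₁, ±λ₂` with `λ₁λ₂ = |M_ν|²`, and to
leading order in `|M_ν|/|M_R|` one has `λ₁ ≈ |M_ν|²/|M_R|` and `λ₂ ≈ |M_R|`,
rigorously expressed by `|M_R| ≤ λ₂ ≤ √(2|M_ν|² + |M_R|²)` and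
`|M_ν|²/√(2|M_ν|² + |M_R|²) ≤ λ₁ ≤ |M_ν|²/|M_R|`. -/
theorem stmt_19 (Mν MR : ℂ) (hMR : MR ≠ 0)
    (hsmall : ‖Mν‖ < ‖MR‖)
    (D : Matrix (Fin 4) (Fin 4) ℂ)
    (hD : D = !![0, (starRingEnd ℂ) Mν, MR, 0;
                 Mν, 0, 0, 0;
                 (starRingEnd ℂ) MR, 0, 0, Mν;
                 0, 0, (starRingEnd ℂ) Mν, 0]) :
    ∃ lam₁ lam₂ : ℝ, 0 ≤ lam₁ ∧ lam₁ ≤ lam₂ ∧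
      D.charpoly.roots
        = {(lam₁ : ℂ), -(lam₁ : ℂ), (lam₂ : ℂ), -(lam₂ : ℂ)} ∧
      lam₁ * lam₂ = ‖Mν‖ ^ 2 ∧
      ‖MR‖ ≤ lam₂ ∧
      lam₂ ≤ Real.sqrt (2 * ‖Mν‖ ^ 2 + ‖MR‖ ^ 2) ∧
      ‖Mν‖ ^ 2
          / Real.sqrt (2 * ‖Mν‖ ^ 2 + ‖MR‖ ^ 2) ≤ lam₁ ∧
      lam₁ ≤ ‖Mν‖ ^ 2 / ‖MR‖ :=
  stmt_19_general Mν MR hMR D hD
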